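/- For n ≥ 3, the automaton 𝒲_n (the unique two-letter coloring of the Wielandt digraph) is synchronizing, the word (a b^{n-2})^{n-2} a of length n² - 3n + 3 resets it, and no shorter word does; hence its reset threshold is exactly n² - 3n + 3. -/
import Mathlib


/-- The state reached from `q` by reading the word `w`. -/
def run {Q A : Type*} (δ : Q → A → Q) (q : Q) (w : List A) : Q := w.foldl δ q

/-- The automaton `𝒲_n`, the unique two-letter coloring of the Wielandt digraph,
on states `0,…,n-1` (paper's `1,…,n` shifted by one): both letters send `i` to `i+1`
for `i < n-1`, while the last state goes to `1` under `a` (= `true`)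
and to `0` under `b` (= `false`). -/
def wiel (n : ℕ) (q : ZMod n) : Bool → ZMod n
  | true => if q.val = n - 1 then 1 else q + 1
  | false => if q.val = n - 1 then 0 else q + 1

section
variable {n : ℕ}

lemma run_nil (δ : ZMod n → Bool → ZMod n) (q) : run δ q [] = q := rfl
lemma run_cons (δ : ZMod n → Bool → ZMod n) (q c w) : run δ q (c :: w) = run δ (δ q c) w := rfl
lemma run_append (δ : ZMod n → Bool → ZMod n) (q u v) :
    run δ q (u ++ v) = run δ (run δ q u) v := List.foldl_append ..

lemma cast_val (hn : 3 ≤ n) (q : ZMod n) : ((q.val : ℕ) : ZMod n) = q := by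
  haveI : NeZero n := ⟨by omega⟩
  exact ZMod.natCast_rightInverse q

lemma val_lt (hn : 3 ≤ n) (q : ZMod n) : q.val < n := by
  haveI : NeZero n := ⟨by omega⟩
  exact ZMod.val_lt q

lemma cast_sub_one (hn : 3 ≤ n) : ((n - 1 : ℕ) : ZMod n) = -1 := by
  refine eq_neg_of_add_eq_zero_left ?_
  calc ((n - 1 : ℕ) : ZMod n) + 1 = (((n - 1) + 1 : ℕ) : ZMod n) := by push_cast; ring
    _ = ((n : ℕ) : ZMod n) := by rw [Nat.sub_add_cancel (by omega)]
    _ = 0 := ZMod.natCast_self n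

lemma cast_sub_two (hn : 3 ≤ n) : ((n - 2 : ℕ) : ZMod n) = -2 := by
  have h1 : ((n - 2 : ℕ) : ZMod n) + 1 = ((n - 1 : ℕ) : ZMod n) := by
    rw [← Nat.cast_one, ← Nat.cast_add, show n - 2 + 1 = n - 1 by omega]
  rw [cast_sub_one hn] at h1
  have := eq_sub_of_add_eq h1
  rw [this]; ring

lemma eq_neg_one_of_val (hn : 3 ≤ n) {q : ZMod n} (h : q.val = n - 1) : q = -1 := by
  have h1 := cast_val hn q
  rw [h] at h1
  rw [← h1, cast_sub_one hn]

lemma val_neg_one' (hn : 3 ≤ n) : (-1 : ZMod n).val = n - 1 := by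
  rw [← cast_sub_one hn, ZMod.val_cast_of_lt (by omega)]

lemma val_add_one (hn : 3 ≤ n) {q : ZMod n} (h : q.val + 1 < n) : (q + 1).val = q.val + 1 := by
  have h1 : q + 1 = ((q.val + 1 : ℕ) : ZMod n) := by
    push_cast [cast_val hn q]
    ring
  rw [h1, ZMod.val_cast_of_lt h]

lemma wiel_false (hn : 3 ≤ n) (q : ZMod n) : wiel n q false = q + 1 := by
  by_cases h : q.val = n - 1
  · have h0 : wiel n q false = 0 := by simp [wiel, h]
    rw [h0, eq_neg_one_of_val hn h]; ring
  · simp [wiel, h]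

lemma wiel_true_of_ne (hn : 3 ≤ n) {q : ZMod n} (h : q.val ≠ n - 1) : wiel n q true = q + 1 := by
  simp [wiel, h]

lemma wiel_true_chord (hn : 3 ≤ n) {q : ZMod n} (h : q.val = n - 1) : wiel n q true = 1 := by
  simp [wiel, h]

lemma run_rep_false (hn : 3 ≤ n) : ∀ (m : ℕ) (q : ZMod n),
    run (wiel n) q (List.replicate m false) = q + m
  | 0, q => by simp [run_nil]
  | m + 1, q => by
    rw [List.replicate_succ, run_cons, run_rep_false hn m, wiel_false hn]
    push_cast; ring

lemma run_seg (hn : 3 ≤ n) (q : ZMod n) :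
    run (wiel n) q (true :: List.replicate (n - 2) false)
      = if q.val = n - 1 then -1 else q - 1 := by
  rw [run_cons, run_rep_false hn, cast_sub_two hn]
  by_cases h : q.val = n - 1
  · rw [if_pos h, wiel_true_chord hn h]; ring
  · rw [if_neg h, wiel_true_of_ne hn h]; ring

lemma run_segpow (hn : 3 ≤ n) : ∀ (k : ℕ) (q : ZMod n),
    run (wiel n) q ((List.replicate k (true :: List.replicate (n - 2) false)).flatten)
      = if q.val = n - 1 ∨ q.val + 1 ≤ k then -1 else q - k
  | 0, q => by
    simp only [List.replicate_zero, List.flatten_nil, run_nil, Nat.cast_zero, sub_zero]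
    by_cases h : q.val = n - 1
    · rw [if_pos (Or.inl h), eq_neg_one_of_val hn h]
    · rw [if_neg (by omega)]
  | k + 1, q => by
    rw [List.replicate_succ, List.flatten_cons, run_append, run_seg hn]
    by_cases h : q.val = n - 1
    · rw [if_pos h, run_segpow hn k, if_pos (Or.inl (val_neg_one' hn)), if_pos (Or.inl h)]
    · rw [if_neg h, run_segpow hn k]
      by_cases h0 : q.val = 0
      · have hq0 : q = 0 := by
          have := cast_val hn q
          rw [h0] at this
          simpa using this.symm
        have : (q - 1).val = n - 1 := by rw [hq0, zero_sub, val_neg_one' hn]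
        rw [if_pos (Or.inl this), if_pos (Or.inr (by omega))]
      · have hv : (q - 1).val = q.val - 1 := by
          have h1 : q - 1 = ((q.val - 1 : ℕ) : ZMod n) := by
            rw [sub_eq_iff_eq_add, ← Nat.cast_add_one,
              show q.val - 1 + 1 = q.val by omega, cast_val hn]
          rw [h1, ZMod.val_cast_of_lt (by have := val_lt hn q; omega)]
        have hne : (q - 1).val ≠ n - 1 := by
          rw [hv]; have := val_lt hn q; omega
        by_cases hc : q.val + 1 ≤ k + 1
        · rw [if_pos (Or.inr (by omega : (q-1).val + 1 ≤ k)), if_pos (Or.inr hc)]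
        · rw [if_neg (by rw [hv]; omega : ¬((q-1).val = n - 1 ∨ (q-1).val + 1 ≤ k)),
            if_neg (by omega : ¬(q.val = n - 1 ∨ q.val + 1 ≤ k + 1))]
          push_cast; ring

lemma sync_word (hn : 3 ≤ n) (q : ZMod n) :
    run (wiel n) q ((List.replicate (n - 2) (true :: List.replicate (n - 2) false)).flatten
      ++ [true]) = 1 := by
  rw [run_append, run_segpow hn]
  by_cases h : q.val = n - 1 ∨ q.val + 1 ≤ n - 2
  · rw [if_pos h]
    show wiel n (-1) true = 1
    exact wiel_true_chord hn (val_neg_one' hn)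
  · rw [if_neg h]
    have hval : q.val = n - 2 := by have := val_lt hn q; omega
    have hq : q = ((n - 2 : ℕ) : ZMod n) := by
      rw [← hval, cast_val hn]
    have h0 : q - ((n - 2 : ℕ) : ZMod n) = 0 := by rw [hq]; ring
    rw [h0]
    show wiel n 0 true = 1
    have : (0 : ZMod n).val = 0 := by simp
    rw [wiel_true_of_ne hn (by omega), zero_add]

/-- number of chord uses -/
def chord (n : ℕ) (q : ZMod n) : List Bool → ℕ
  | [] => 0
  | c :: w => (if q.val = n - 1 ∧ c = true then 1 else 0) + chord n (wiel n q c) w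

lemma run_eq (hn : 3 ≤ n) : ∀ (w : List Bool) (q : ZMod n),
    run (wiel n) q w = q + w.length + chord n q w
  | [], q => by simp [run_nil, chord]
  | c :: w, q => by
    rw [run_cons, run_eq hn w (wiel n q c)]
    have hw : wiel n q c = q + 1 + ((if q.val = n - 1 ∧ c = true then 1 else 0 : ℕ) : ZMod n) := by
      by_cases h : q.val = n - 1
      · cases c
        · rw [if_neg (by simp), wiel_false hn]; push_cast; ring
        · rw [if_pos ⟨h, rfl⟩, wiel_true_chord hn h, eq_neg_one_of_val hn h]
          push_cast; ring
      · rw [if_neg (by tauto)]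
        cases c
        · rw [wiel_false hn]; push_cast; ring
        · rw [wiel_true_of_ne hn h]; push_cast; ring
    rw [show chord n q (c :: w)
        = (if q.val = n - 1 ∧ c = true then 1 else 0) + chord n (wiel n q c) w from rfl, hw]
    simp only [List.length_cons]
    push_cast
    ring

lemma chord_length (hn : 3 ≤ n) : ∀ (w : List Bool) (q : ZMod n),
    1 ≤ chord n q w → (n - 1 - q.val) + 1 + (chord n q w - 1) * (n - 1) ≤ w.length
  | [], q => by simp [chord]
  | c :: w, q => by
    intro hk
    by_cases h : q.val = n - 1 ∧ c = true
    · have hchord : chord n q (c :: w) = 1 + chord n (wiel n q c) w := by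
        simp [chord, h]
      have hq1 : wiel n q c = 1 := by rw [h.2]; exact wiel_true_chord hn h.1
      have hv1 : (wiel n q c).val = 1 := by
        rw [hq1, show (1 : ZMod n) = ((1 : ℕ) : ZMod n) by push_cast; ring,
          ZMod.val_cast_of_lt (by omega)]
      rcases Nat.eq_zero_or_pos (chord n (wiel n q c) w) with h0 | hpos
      · rw [hchord, h0]
        simp only [List.length_cons]
        have h1 := h.1
        omega
      · have ih := chord_length hn w (wiel n q c) hpos
        rw [hv1] at ih
        rw [hchord]
        obtain ⟨m, hm⟩ : ∃ m, chord n (wiel n q c) w = m + 1 :=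
          ⟨_, (Nat.succ_pred_eq_of_pos hpos).symm⟩
        rw [hm] at ih ⊢
        simp only [List.length_cons]
        have e1 : 1 + (m + 1) - 1 = m + 1 := by omega
        rw [e1, Nat.succ_mul, Nat.add_sub_cancel] at *
        have e2 : n - 1 - q.val = 0 := by omega
        have e3 : n - 1 - 1 + 1 = n - 1 := by omega
        rw [e2]
        linarith [ih]
    · have hchord : chord n q (c :: w) = chord n (wiel n q c) w := by
        simp [chord, h]
      rw [hchord] at hk ⊢
      have ih := chord_length hn w (wiel n q c) hk
      by_cases hq : q.val = n - 1
      · have hc : c = false := by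
          rcases c with _ | _
          · rfl
          · exact absurd ⟨hq, rfl⟩ h
        have hv : (wiel n q c).val = 0 := by
          rw [hc, wiel_false hn, eq_neg_one_of_val hn hq]
          simp
        rw [hv] at ih
        simp only [List.length_cons]
        have e2 : n - 1 - q.val = 0 := by omega
        have e3 : n - 1 - 0 = n - 1 := by omega
        rw [e3] at ih
        rw [e2]
        linarith [ih]
      · have hvlt : q.val + 1 < n := by
          have := val_lt hn q
          omega
        have hv : (wiel n q c).val = q.val + 1 := by
          have hw : wiel n q c = q + 1 := by
            rcases c with _ | _
            · exact wiel_false hn q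
            · exact wiel_true_of_ne hn hq
          rw [hw, val_add_one hn hvlt]
        rw [hv] at ih
        simp only [List.length_cons]
        have e : n - 1 - q.val ≤ (n - 1 - (q.val + 1)) + 1 := by omega
        linarith [ih, e]

lemma arith (hn : 3 ≤ n) : n ^ 2 - 3 * n + 3 = (n - 2) * (n - 1) + 1 := by
  have h1 : 3 * n ≤ n ^ 2 := by nlinarith
  zify [h1, show 2 ≤ n by omega, show 1 ≤ n by omega]
  ring

end

/-- For `n ≥ 3`, the automaton `𝒲_n` is synchronizing, the word `(a b^{n-2})^{n-2} a`
of length `n² - 3n + 3` resets it, and no shorter word does: its reset threshold is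
exactly `n² - 3n + 3`. -/
theorem stmt_7 (n : ℕ) (hn : 3 ≤ n) :
    let w : List Bool := (List.replicate (n - 2) (true :: List.replicate (n - 2) false)).flatten
      ++ [true]
    w.length = n ^ 2 - 3 * n + 3 ∧
    (∃ p : ZMod n, ∀ q, run (wiel n) q w = p) ∧
    (∀ v : List Bool, (∃ p : ZMod n, ∀ q, run (wiel n) q v = p) →
      n ^ 2 - 3 * n + 3 ≤ v.length) := by
  intro w
  refine ⟨?_, ⟨1, fun q => sync_word hn q⟩, ?_⟩
  · show ((List.replicate (n - 2) (true :: List.replicate (n - 2) false)).flatten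
      ++ [true]).length = n ^ 2 - 3 * n + 3
    have hseg : (true :: List.replicate (n - 2) false).length = n - 1 := by
      simp [List.length_replicate]
      omega
    rw [List.length_append, List.length_flatten, List.map_replicate, hseg,
      List.sum_replicate, smul_eq_mul, arith hn]
    simp
  · rintro v ⟨p, hp⟩
    set q0 : ZMod n := p - (v.length : ZMod n) - ((n - 1 : ℕ) : ZMod n) with hq0
    have h1 := hp q0
    rw [run_eq hn] at h1
    have hcast : ((chord n q0 v : ℕ) : ZMod n) = ((n - 1 : ℕ) : ZMod n) := by
      rw [hq0] at h1 ⊢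
      linear_combination h1
    have hmodeq : chord n q0 v % n = (n - 1) % n :=
      (ZMod.natCast_eq_natCast_iff _ _ _).mp hcast
    have hge : n - 1 ≤ chord n q0 v := by
      have h3 := Nat.mod_le (chord n q0 v) n
      rw [Nat.mod_eq_of_lt (show n - 1 < n by omega)] at hmodeq
      omega
    have hlb := chord_length hn v q0 (by omega)
    have hmul : (n - 2) * (n - 1) ≤ (chord n q0 v - 1) * (n - 1) :=
      Nat.mul_le_mul_right _ (by omega)
    rw [arith hn]
    linarith [hlb, hmul]
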